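/- arXiv:alg-geom/9708006 — 4 statements merged into one kernel-verified Lean document; each statement's English description precedes it below -/
import Mathlib

section
/- Let A be a commutative ring and L a finitely generated ideal such that A/L is a flat A-module. Then L is generated by an idempotent element: there exists e ∈ L with e² = e and L = eA. Consequently A ≅ L × (A/L) and Spec(A/L) → Spec(A) is an open (and closed) immersion. -/
/-!
Flatness of `A ⧸ L` makes `L` idempotent (`L ⊓ J = L * J` for every ideal `J`, take `J = L`), and
a finitely generated idempotent ideal is generated by an idempotent `e`. Multiplication by `e` is
then a projection of `A` onto `L` with kernel `(1 - e)`, which splits `A` as `L × A ⧸ L`, and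
`V(L) = V(e) = D(1 - e)` is clopen in `Spec A`.
-/

universe u

open PrimeSpectrum Topology

noncomputable def Submodule.equivProdQuotientOfIsCompl {R M : Type*} [Ring R] [AddCommGroup M]
    [Module R M] {p q : Submodule R M} (h : IsCompl p q) : M ≃ₗ[R] p × (M ⧸ p) :=
  (p.prodEquivOfIsCompl q h).symm ≪≫ₗ
    (LinearEquiv.refl R p).prodCongr (p.quotientEquivOfIsCompl q h).symm

section

variable {R : Type*} [CommRing R] {e : R}

theorem IsIdempotentElem.isCompl_span_singleton (he : IsIdempotentElem e) :
    IsCompl (Ideal.span {e}) (Ideal.span {1 - e}) := by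
  have hT : IsIdempotentElem (LinearMap.toSpanSingleton R R e) := by
    ext
    simp [he.eq]
  rw [Ideal.span, LinearMap.span_singleton_eq_range, ← he.ker_toSpanSingleton_eq_span]
  exact LinearMap.IsIdempotentElem.isCompl hT

theorem PrimeSpectrum.isOpenEmbedding_comap_mk_of_isIdempotentElem (he : IsIdempotentElem e) :
    IsOpenEmbedding (comap (Ideal.Quotient.mk (Ideal.span {e}))) := by
  have hsurj := Ideal.Quotient.mk_surjective (I := Ideal.span {e})
  refine ⟨(isClosedEmbedding_comap_of_surjective _ _ hsurj).isEmbedding, ?_⟩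
  rw [range_comap_of_surjective _ _ hsurj, Ideal.mk_ker, zeroLocus_span]
  exact (isClopen_iff_zeroLocus.mpr ⟨e, he, rfl⟩).isOpen

end

theorem statement2 (A : Type u) [CommRing A] (L : Ideal A) (hfg : L.FG)
    (hflat : Module.Flat A (A ⧸ L)) :
    (∃ e ∈ L, e * e = e ∧ L = Ideal.span {e}) ∧
    Nonempty (A ≃ₗ[A] (↥L × (A ⧸ L))) ∧
    Topology.IsOpenEmbedding (PrimeSpectrum.comap (Ideal.Quotient.mk L)) ∧
    IsClosed (Set.range (PrimeSpectrum.comap (Ideal.Quotient.mk L))) := by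
  obtain ⟨e, he, rfl⟩ := (L.isIdempotentElem_iff_of_fg hfg).mp L.isIdempotentElem_of_pure
  exact ⟨⟨e, Ideal.mem_span_singleton_self e, he.eq, rfl⟩,
    ⟨Submodule.equivProdQuotientOfIsCompl he.isCompl_span_singleton⟩,
    isOpenEmbedding_comap_mk_of_isIdempotentElem he,
    isClosed_range_comap_of_surjective _ _ Ideal.Quotient.mk_surjective⟩
end

section
/- Let A be a noetherian commutative ring and I ⊆ J ideals each equal to its own radical. Let Â denote the J-adic completion of A, and suppose J^n Â ⊆ I Â for some n > 0. Then the canonical surjection A/I → A/J makes A/J a flat (A/I)-module; consequently Spec(A/J) is open and closed in Spec(A/I). -/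
/-!
STATEMENT 3: Let `A` be a noetherian commutative ring and `I ⊆ J` ideals each equal to its
own radical.  Let `Â` denote the `J`-adic completion of `A`, and suppose `J^n Â ⊆ I Â` for
some `n > 0`.  Then the canonical surjection `A/I → A/J` makes `A/J` a flat `(A/I)`-module;
consequently `Spec(A/J)` is open and closed in `Spec(A/I)`.
-/

universe u

/-- Pulling back `J^n Â ⊆ I Â` along the evaluation maps of the completion. -/
lemma stmt3_pullback (A : Type u) [CommRing A] (I J : Ideal A) (n : ℕ)
    (h : Ideal.map (algebraMap A (AdicCompletion J A)) (J ^ n) ≤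
        Ideal.map (algebraMap A (AdicCompletion J A)) I) (m : ℕ) :
    J ^ n ≤ I ⊔ J ^ m := by
  intro a ha
  have h1 : algebraMap A (AdicCompletion J A) a ∈
      Ideal.map (algebraMap A (AdicCompletion J A)) I :=
    h (Ideal.mem_map_of_mem _ ha)
  have h2 := Ideal.mem_map_of_mem
    ((AdicCompletion.evalₐ J m : AdicCompletion J A →ₐ[A] A ⧸ J ^ m) :
      AdicCompletion J A →+* A ⧸ J ^ m) h1
  rw [Ideal.map_map] at h2
  have hc : ((AdicCompletion.evalₐ J m : AdicCompletion J A →ₐ[A] A ⧸ J ^ m) :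
      AdicCompletion J A →+* A ⧸ J ^ m).comp (algebraMap A (AdicCompletion J A)) =
      Ideal.Quotient.mk (J ^ m) := by
    rw [AlgHom.comp_algebraMap]
    exact (Ideal.Quotient.algebraMap_eq _)
  rw [hc] at h2
  have h3 : ((AdicCompletion.evalₐ J m : AdicCompletion J A →ₐ[A] A ⧸ J ^ m) :
      AdicCompletion J A →+* A ⧸ J ^ m) (algebraMap A (AdicCompletion J A) a)
      = Ideal.Quotient.mk (J ^ m) a := by
    show (AdicCompletion.evalₐ J m) ((algebraMap A (AdicCompletion J A)) a) = _
    rw [(AdicCompletion.evalₐ J m).commutes a, Ideal.Quotient.algebraMap_eq]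
  rw [h3] at h2
  obtain ⟨b, hb, hba⟩ := (Ideal.mem_map_iff_of_surjective _
    Ideal.Quotient.mk_surjective).mp h2
  have hsub : a - b ∈ J ^ m := by
    have := Ideal.Quotient.eq.mp hba.symm
    simpa using this
  have : b + (a - b) ∈ I ⊔ J ^ m := Submodule.add_mem_sup hb hsub
  simpa using this

/-- In the quotient `A⧸I` the image of `J` is generated by an idempotent. -/
lemma stmt3_idem (A : Type u) [CommRing A] [IsNoetherianRing A]
    (I J : Ideal A) (hI : I.IsRadical) (n : ℕ) (hn : 0 < n)
    (hpull : ∀ m : ℕ, J ^ n ≤ I ⊔ J ^ m) :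
    ∃ e : A ⧸ I, IsIdempotentElem e ∧
      J.map (Ideal.Quotient.mk I) = Ideal.span {e} := by
  set J' : Ideal (A ⧸ I) := J.map (Ideal.Quotient.mk I) with hJ'
  haveI : IsReduced (A ⧸ I) := (Ideal.isRadical_iff_quotient_reduced I).mp hI
  -- J'^n ≤ J'^m for all m
  have hJn : ∀ m : ℕ, J' ^ n ≤ J' ^ m := by
    intro m
    calc J' ^ n = (J ^ n).map (Ideal.Quotient.mk I) := (Ideal.map_pow _ _ _).symm
      _ ≤ (I ⊔ J ^ m).map (Ideal.Quotient.mk I) := Ideal.map_mono (hpull m)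
      _ = I.map (Ideal.Quotient.mk I) ⊔ (J ^ m).map (Ideal.Quotient.mk I) :=
          Ideal.map_sup _ _ _
      _ = J' ^ m := by
          rw [Ideal.map_quotient_self, Ideal.map_pow, bot_sup_eq]
  have hidem : IsIdempotentElem J' := by
    refine le_antisymm Ideal.mul_le_right ?_
    rw [hJ', Ideal.map_le_iff_le_comap]
    intro a ha
    simp only [Ideal.mem_comap]
    set x : A ⧸ I := Ideal.Quotient.mk I a with hx
    have hxJ : x ∈ J' := Ideal.mem_map_of_mem _ ha
    have h1 : x ^ n ∈ (⨅ i : ℕ, J' ^ i • ⊤ : Submodule (A ⧸ I) (A ⧸ I)) := by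
      rw [Submodule.mem_iInf]
      intro i
      have : x ^ n ∈ J' ^ i := hJn i (Ideal.pow_mem_pow hxJ n)
      simpa [smul_eq_mul, Ideal.mul_top] using this
    obtain ⟨r, hr⟩ := (Ideal.mem_iInf_smul_pow_eq_bot_iff (I := J') (x ^ n)).mp h1
    have h2 : (1 - (r : A ⧸ I)) * x ^ n = 0 := by
      have : (r : A ⧸ I) * x ^ n = x ^ n := by simpa [smul_eq_mul] using hr
      rw [sub_mul, one_mul, this, sub_self]
    have h3 : ((1 - (r : A ⧸ I)) * x) ^ n = 0 := by
      obtain ⟨k, rfl⟩ := Nat.exists_eq_add_of_lt hn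
      rw [mul_pow]
      calc (1 - (r : A ⧸ I)) ^ (0 + k + 1) * x ^ (0 + k + 1)
          = (1 - (r : A ⧸ I)) ^ (0 + k) * ((1 - (r : A ⧸ I)) * x ^ (0 + k + 1)) := by ring
        _ = 0 := by rw [h2, mul_zero]
    have h4 : (1 - (r : A ⧸ I)) * x = 0 := by
      have : IsNilpotent ((1 - (r : A ⧸ I)) * x) := ⟨n, h3⟩
      exact this.eq_zero
    have h5 : x = (r : A ⧸ I) * x := by linear_combination h4
    rw [h5]
    exact Ideal.mul_mem_mul r.2 hxJ
  obtain ⟨e, he, hJe⟩ :=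
    (Ideal.isIdempotentElem_iff_of_fg J' (IsNoetherian.noetherian J')).mp hidem
  exact ⟨e, he, by rw [hJe, Ideal.submodule_span_eq]⟩

lemma stmt3_ker (A : Type u) [CommRing A] (I J : Ideal A) (hIJ : I ≤ J) :
    RingHom.ker (Ideal.Quotient.factor hIJ) = J.map (Ideal.Quotient.mk I) := by
  refine le_antisymm ?_ ?_
  · intro x hx
    obtain ⟨a, rfl⟩ := Ideal.Quotient.mk_surjective x
    rw [RingHom.mem_ker, Ideal.Quotient.factor_mk, Ideal.Quotient.eq_zero_iff_mem] at hx
    exact Ideal.mem_map_of_mem _ hx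
  · rw [Ideal.map_le_iff_le_comap]
    intro a ha
    simp only [Ideal.mem_comap, RingHom.mem_ker, Ideal.Quotient.factor_mk]
    exact Ideal.Quotient.eq_zero_iff_mem.mpr ha

set_option maxHeartbeats 1000000 in
lemma stmt3_flat (A : Type u) [CommRing A] (I J : Ideal A) (hIJ : I ≤ J)
    (e : A ⧸ I) (he : IsIdempotentElem e)
    (hJe : J.map (Ideal.Quotient.mk I) = Ideal.span {e}) :
    RingHom.Flat (Ideal.Quotient.factor hIJ) := by
  letI : Algebra (A ⧸ I) (A ⧸ J) := (Ideal.Quotient.factor hIJ).toAlgebra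
  have hfe : Ideal.Quotient.factor hIJ e = 0 := by
    have : e ∈ RingHom.ker (Ideal.Quotient.factor hIJ) := by
      rw [stmt3_ker A I J hIJ, hJe]
      exact Ideal.mem_span_singleton_self e
    exact this
  show Module.Flat (A ⧸ I) (A ⧸ J)
  have hkerspan : J.map (Ideal.Quotient.mk I) ≤
      LinearMap.ker (LinearMap.toSpanSingleton (A ⧸ I) (A ⧸ I) (1 - e)) := by
    rw [IsIdempotentElem.ker_toSpanSingleton_one_sub_eq_span he, ← hJe]
  let f0 : ((A ⧸ I) ⧸ J.map (Ideal.Quotient.mk I)) →ₗ[A ⧸ I] (A ⧸ I) :=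
    Submodule.liftQ _ (LinearMap.toSpanSingleton (A ⧸ I) (A ⧸ I) (1 - e)) hkerspan
  let ρ := DoubleQuot.quotQuotEquivQuotOfLE hIJ
  have halg : ∀ b : A ⧸ I, algebraMap (A ⧸ I) (A ⧸ J) b = Ideal.Quotient.factor hIJ b :=
    fun _ => rfl
  have hρsymm : ∀ b : A ⧸ I, ρ.symm (Ideal.Quotient.factor hIJ b)
      = Ideal.Quotient.mk (J.map (Ideal.Quotient.mk I)) b := by
    intro b
    obtain ⟨a, rfl⟩ := Ideal.Quotient.mk_surjective b
    rw [Ideal.Quotient.factor_mk]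
    exact DoubleQuot.quotQuotEquivQuotOfLE_symm_mk a hIJ
  let i : (A ⧸ J) →ₗ[A ⧸ I] (A ⧸ I) :=
    { toFun := fun x => f0 (ρ.symm x)
      map_add' := fun x y => by
        show f0 (ρ.symm (x + y)) = f0 (ρ.symm x) + f0 (ρ.symm y)
        rw [map_add, map_add]
      map_smul' := fun b x => by
        show f0 (ρ.symm (b • x)) = b • f0 (ρ.symm x)
        have hsm : ρ.symm (b • x) = b • ρ.symm x := by
          rw [Algebra.smul_def, halg, map_mul, hρsymm, Algebra.smul_def,
            Ideal.Quotient.algebraMap_eq]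
        rw [hsm, map_smul] }
  have hretract : (Algebra.linearMap (A ⧸ I) (A ⧸ J)).comp i = LinearMap.id := by
    ext x
    obtain ⟨a, rfl⟩ := Ideal.Quotient.mk_surjective x
    have h1 : ρ.symm (Ideal.Quotient.mk J a)
        = Ideal.Quotient.mk (J.map (Ideal.Quotient.mk I)) (Ideal.Quotient.mk I a) :=
      DoubleQuot.quotQuotEquivQuotOfLE_symm_mk a hIJ
    show algebraMap (A ⧸ I) (A ⧸ J) (f0 (ρ.symm (Ideal.Quotient.mk J a)))
        = Ideal.Quotient.mk J a
    rw [h1]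
    have h2 : f0 (Ideal.Quotient.mk (J.map (Ideal.Quotient.mk I)) (Ideal.Quotient.mk I a))
        = Ideal.Quotient.mk I a * (1 - e) := by
      show f0 (Submodule.Quotient.mk _) = _
      rw [Submodule.liftQ_apply]
      exact LinearMap.toSpanSingleton_apply (A ⧸ I) (A ⧸ I) (1 - e) (Ideal.Quotient.mk I a)
    rw [h2, halg, map_mul, map_sub, map_one, hfe, sub_zero, mul_one,
      Ideal.Quotient.factor_mk]
  exact Module.Flat.of_retract (R := A ⧸ I) (M := A ⧸ I) (N := A ⧸ J) i (Algebra.linearMap (A ⧸ I) (A ⧸ J)) hretract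

theorem statement3 (A : Type u) [CommRing A] [IsNoetherianRing A]
    (I J : Ideal A) (hIJ : I ≤ J) (hI : I.IsRadical) (hJ : J.IsRadical)
    (h : ∃ n : ℕ, 0 < n ∧
      Ideal.map (algebraMap A (AdicCompletion J A)) (J ^ n) ≤
        Ideal.map (algebraMap A (AdicCompletion J A)) I) :
    RingHom.Flat (Ideal.Quotient.factor hIJ) ∧
    IsOpen (Set.range (PrimeSpectrum.comap (Ideal.Quotient.factor hIJ))) ∧
    IsClosed (Set.range (PrimeSpectrum.comap (Ideal.Quotient.factor hIJ))) := by
  obtain ⟨n, hn, hmap⟩ := h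
  obtain ⟨e, he, hJe⟩ := stmt3_idem A I J hI n hn (stmt3_pullback A I J n hmap)
  have hfsurj : Function.Surjective (Ideal.Quotient.factor hIJ) := by
    intro x
    obtain ⟨a, rfl⟩ := Ideal.Quotient.mk_surjective x
    exact ⟨Ideal.Quotient.mk I a, Ideal.Quotient.factor_mk hIJ a⟩
  have hrange : Set.range (PrimeSpectrum.comap (Ideal.Quotient.factor hIJ))
      = PrimeSpectrum.zeroLocus ({e} : Set (A ⧸ I)) := by
    rw [range_comap_of_surjective _ _ hfsurj, stmt3_ker A I J hIJ, hJe,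
      PrimeSpectrum.zeroLocus_span]
  have hcompl : Set.range (PrimeSpectrum.comap (Ideal.Quotient.factor hIJ))
      = (PrimeSpectrum.zeroLocus ({1 - e} : Set (A ⧸ I)))ᶜ := by
    rw [hrange]
    ext p
    simp only [PrimeSpectrum.mem_zeroLocus, Set.singleton_subset_iff, Set.mem_compl_iff,
      SetLike.mem_coe]
    constructor
    · intro hep h1e
      exact p.isPrime.ne_top ((Ideal.eq_top_iff_one _).mpr
        (by simpa using p.asIdeal.add_mem hep h1e))
    · intro h1e
      have hmul : e * (1 - e) = 0 := by
        have := he.eq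
        linear_combination -this
      rcases p.isPrime.mem_or_mem (show e * (1 - e) ∈ p.asIdeal by
        rw [hmul]; exact Ideal.zero_mem _) with hmem | hmem
      · exact hmem
      · exact absurd hmem h1e
  refine ⟨stmt3_flat A I J hIJ e he hJe, ?_, ?_⟩
  · rw [hcompl]
    exact (PrimeSpectrum.isClosed_zeroLocus _).isOpen_compl
  · rw [hrange]
    exact PrimeSpectrum.isClosed_zeroLocus _
end

section
/- Let D be a category, Γ: D → D a functor with a natural transformation γ: Γ → Id inducing bijections Hom(ΓE, ΓF) ≅ Hom(ΓE, F), and suppose Γ has a right adjoint Λ. Let λ: Id → Λ be the composite of the unit Id → ΛΓ with Λγ. Then: (a) Λγ: ΛΓ → Λ is an isomorphism; (b) Γλ: Γ → ΓΛ is an isomorphism; (c) the maps λ(Λ) and Λ(λ) from Λ to ΛΛ agree and are isomorphisms. -/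
/-!
Under the adjunction `Hom(X, ΛY) ≅ Hom(ΓX, Y)`, composing with `Λγ_E` corresponds to composing
with `γ_E`, so the hypothesis is exactly the Yoneda criterion for `Λγ_E` to be invertible.
The map `λ_E` is the adjoint transpose of `γ_E`, i.e. `Γλ_E ≫ ε_E = γ_E`, and the unique lift of
`ε_E` through `γ_E` inverts `Γλ_E`. Transposing once more gives `ε_E ≫ λ_E = γ_{ΛE}`; with the
triangle identity this yields `λ_{ΛF} = Λλ_F`. Finally `λ_{ΛF} = η_{ΛF} ≫ Λγ_{ΛF}` is invertible
because `η_{ΛF}` is a section of `Λε_F = (ΛΓλ_F)⁻¹ ≫ Λγ_F`, which is invertible by (a) and (b).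
-/

universe u v

open CategoryTheory

section

variable {D : Type u} [Category.{v} D] {Γ Λ : D ⥤ D}

def IsIdempotent (γ : Γ ⟶ 𝟭 D) : Prop :=
  ∀ E F : D, Function.Bijective (fun f : Γ.obj E ⟶ Γ.obj F => f ≫ γ.app F)

namespace IsIdempotent

variable {γ : Γ ⟶ 𝟭 D}

lemma app_obj_eq_map_app (hγ : IsIdempotent γ) (F : D) : γ.app (Γ.obj F) = Γ.map (γ.app F) :=
  (hγ _ F).1 (γ.naturality (γ.app F)).symm

lemma isIso_map_app (adj : Γ ⊣ Λ) (hγ : IsIdempotent γ) (E : D) : IsIso (Λ.map (γ.app E)) := by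
  refine isIso_of_yoneda_map_bijective _ fun X => ?_
  have transport : (fun f : X ⟶ Λ.obj (Γ.obj E) => f ≫ Λ.map (γ.app E)) =
      adj.homEquiv X E ∘ (fun f => f ≫ γ.app E) ∘ (adj.homEquiv X (Γ.obj E)).symm := by
    ext f
    simp [Adjunction.homEquiv_naturality_right]
  rw [transport]
  exact (adj.homEquiv X E).bijective.comp ((hγ X E).comp (adj.homEquiv X _).symm.bijective)

end IsIdempotent

/-- The paper's `λ_E`. -/
def transposeApp (adj : Γ ⊣ Λ) (γ : Γ ⟶ 𝟭 D) (E : D) : E ⟶ Λ.obj E :=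
  adj.unit.app E ≫ Λ.map (γ.app E)

variable (adj : Γ ⊣ Λ) {γ : Γ ⟶ 𝟭 D}

lemma map_transposeApp_comp_counit (E : D) :
    Γ.map (transposeApp adj γ E) ≫ adj.counit.app E = γ.app E := by
  simp [transposeApp]

lemma counit_comp_transposeApp (hγ : IsIdempotent γ) (E : D) :
    adj.counit.app E ≫ transposeApp adj γ E = γ.app (Λ.obj E) := by
  apply (adj.homEquiv _ _).symm.injective
  simp only [Adjunction.homEquiv_counit, Functor.map_comp, Category.assoc, Functor.id_obj,
    map_transposeApp_comp_counit, ← hγ.app_obj_eq_map_app]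
  exact γ.naturality (adj.counit.app E)

lemma isIso_map_transposeApp (hγ : IsIdempotent γ) (E : D) :
    IsIso (Γ.map (transposeApp adj γ E)) := by
  obtain ⟨u, hu⟩ := (hγ (Λ.obj E) E).2 (adj.counit.app E)
  refine ⟨u, (hγ E E).1 ?_, (hγ _ _).1 ?_⟩
  · simp [hu, map_transposeApp_comp_counit]
  · have hnat := γ.naturality (transposeApp adj γ E)
    dsimp only [Functor.id_obj, Functor.id_map] at hnat hu ⊢
    rw [Category.assoc, hnat, reassoc_of% hu, counit_comp_transposeApp adj hγ, Category.id_comp]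

lemma transposeApp_obj_eq_map_transposeApp (hγ : IsIdempotent γ) (F : D) :
    transposeApp adj γ (Λ.obj F) = Λ.map (transposeApp adj γ F) := by
  rw [transposeApp, ← counit_comp_transposeApp adj hγ, Λ.map_comp,
    adj.right_triangle_components_assoc]

lemma isIso_map_counit_app (hγ : IsIdempotent γ) (F : D) :
    IsIso (Λ.map (adj.counit.app F)) := by
  have := hγ.isIso_map_app adj F
  have := isIso_map_transposeApp adj hγ F
  have fac : Λ.map (Γ.map (transposeApp adj γ F)) ≫ Λ.map (adj.counit.app F) =
      Λ.map (γ.app F) := by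
    rw [← Λ.map_comp, map_transposeApp_comp_counit]
  exact IsIso.of_isIso_fac_left fac

lemma isIso_unit_app_obj (hγ : IsIdempotent γ) (F : D) : IsIso (adj.unit.app (Λ.obj F)) := by
  have := isIso_map_counit_app adj hγ F
  have triangle : adj.unit.app (Λ.obj F) ≫ Λ.map (adj.counit.app F) = 𝟙 (Λ.obj F) :=
    adj.right_triangle_components F
  exact IsIso.of_isIso_fac_right (hh := IsIso.id _) triangle

lemma isIso_transposeApp_obj (hγ : IsIdempotent γ) (F : D) :
    IsIso (transposeApp adj γ (Λ.obj F)) := by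
  have := isIso_unit_app_obj adj hγ F
  have := hγ.isIso_map_app adj (Λ.obj F)
  unfold transposeApp
  infer_instance

end

theorem statement13 {D : Type u} [Category.{v} D] (Γ Λ : D ⥤ D) (adj : Γ ⊣ Λ)
    (γ : Γ ⟶ 𝟭 D)
    (h : ∀ E F : D, Function.Bijective (fun f : Γ.obj E ⟶ Γ.obj F => f ≫ γ.app F)) :
    (∀ E : D, IsIso (Λ.map (γ.app E))) ∧
    (∀ E : D, IsIso (Γ.map (adj.unit.app E ≫ Λ.map (γ.app E)))) ∧
    (∀ F : D,
      adj.unit.app (Λ.obj F) ≫ Λ.map (γ.app (Λ.obj F)) =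
        Λ.map (adj.unit.app F ≫ Λ.map (γ.app F)) ∧
      IsIso (adj.unit.app (Λ.obj F) ≫ Λ.map (γ.app (Λ.obj F)))) :=
  ⟨IsIdempotent.isIso_map_app adj h, isIso_map_transposeApp adj h,
    fun F => ⟨transposeApp_obj_eq_map_transposeApp adj h F, isIso_transposeApp_obj adj h F⟩⟩
end

section
/- Let R be a noetherian commutative ring, J ⊆ R an ideal, and N a J-torsion R-module such that Ext^1_R(M, N) = 0 for every finitely generated J-torsion R-module M. Then N is an injective object of the category of J-torsion R-modules: every map from a J-torsion submodule of a J-torsion module into N extends to the whole module. -/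
/-!
Extending a map `f : M' → N` is a Zorn's lemma argument on partial maps, so it suffices to
extend a partial map with domain `p` to `p ⊔ R ∙ x`. The obstruction to that is the pushout
of `0 → p → p ⊔ R ∙ x → Q → 0` along `f`, an extension of `Q` by `N`: a retraction of
`N → X` composed with `p ⊔ R ∙ x → X` is the required extension. Here
`Q ≅ (p ⊔ R ∙ x) / p` is cyclic and, as a subquotient of `M`, `J`-torsion, so the extension
splits by hypothesis.
-/

universe u v

def IsTorsionByPowers {R : Type u} [CommRing R] (J : Ideal R)
    (M : Type v) [AddCommGroup M] [Module R M] : Prop :=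
  ∀ m : M, ∃ n : ℕ, ∀ a ∈ J ^ n, a • m = 0

namespace IsTorsionByPowers

variable {R : Type*} [CommRing R] {J : Ideal R} {M M' : Type*} [AddCommGroup M] [Module R M]
  [AddCommGroup M'] [Module R M']

theorem of_injective (hM : IsTorsionByPowers J M) {g : M' →ₗ[R] M}
    (hg : Function.Injective g) : IsTorsionByPowers J M' := by
  intro m
  obtain ⟨n, hn⟩ := hM (g m)
  exact ⟨n, fun a ha => hg (by rw [map_smul, hn a ha, map_zero])⟩

theorem of_surjective (hM : IsTorsionByPowers J M) {g : M →ₗ[R] M'}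
    (hg : Function.Surjective g) : IsTorsionByPowers J M' := by
  intro m
  obtain ⟨m, rfl⟩ := hg m
  obtain ⟨n, hn⟩ := hM m
  exact ⟨n, fun a ha => by rw [← map_smul, hn a ha, map_zero]⟩

end IsTorsionByPowers

theorem Submodule.finite_quotient_sup_span_singleton {R M : Type*} [CommRing R]
    [AddCommGroup M] [Module R M] (p : Submodule R M) (x : M) :
    Module.Finite R
      (↥(p ⊔ (R ∙ x)) ⧸ LinearMap.range (inclusion (le_sup_left : p ≤ p ⊔ (R ∙ x)))) := by
  refine Module.Finite.of_surjective
    (LinearMap.toSpanSingleton R _ (Quotient.mk ⟨x, mem_sup_right (mem_span_singleton_self x)⟩)) ?_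
  rintro ⟨⟨w, hw⟩⟩
  obtain ⟨y, hy, z, hz, rfl⟩ := mem_sup.1 hw
  obtain ⟨r, rfl⟩ := mem_span_singleton.1 hz
  refine ⟨r, (Quotient.eq _).2 ⟨⟨-y, neg_mem hy⟩, ?_⟩⟩
  ext
  simp

theorem LinearPMap.exists_extension_of_forall_exists_mem_domain {R E F : Type*} [Ring R]
    [AddCommGroup E] [Module R E] [AddCommGroup F] [Module R F]
    (hstep : ∀ (f : E →ₗ.[R] F) (x : E), ∃ g, f ≤ g ∧ x ∈ g.domain) (f : E →ₗ.[R] F) :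
    ∃ g : E →ₗ[R] F, ∀ x : f.domain, g x = f x := by
  obtain ⟨m, hfm, hmax⟩ := zorn_le_nonempty_Ici₀ f
    (fun c _ hc _ _ => ⟨LinearPMap.sSup c hc.directedOn, fun _ => LinearPMap.le_sSup _⟩) f le_rfl
  have hdom (x : E) : x ∈ m.domain := by
    obtain ⟨g, hmg, hx⟩ := hstep m x
    exact (hmax hmg).1 hx
  exact ⟨m.toFun ∘ₗ LinearMap.codRestrict m.domain LinearMap.id hdom, fun x => (hfm.2 rfl).symm⟩

namespace LinearMap

variable {R : Type*} [CommRing R] {A B N : Type*} [AddCommGroup A] [Module R A]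
  [AddCommGroup B] [Module R B] [AddCommGroup N] [Module R N]
  (f : A →ₗ[R] N) (i : A →ₗ[R] B)

abbrev pushout : Type _ := (N × B) ⧸ range (f.prod (-i))

namespace pushout

def inl : N →ₗ[R] f.pushout i := (range (f.prod (-i))).mkQ ∘ₗ LinearMap.inl R N B

def inr : B →ₗ[R] f.pushout i := (range (f.prod (-i))).mkQ ∘ₗ LinearMap.inr R N B

theorem inl_add_inr (n : N) (b : B) :
    inl f i n + inr f i b = Submodule.Quotient.mk (n, b) := by
  simp [inl, inr, ← Submodule.Quotient.mk_add]

theorem inr_apply_map (a : A) : inr f i (i a) = inl f i (f a) := by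
  rw [inl, inr, comp_apply, comp_apply, Submodule.mkQ_apply, Submodule.mkQ_apply,
    Submodule.Quotient.eq]
  exact ⟨-a, by ext <;> simp⟩

theorem inr_comp : inr f i ∘ₗ i = inl f i ∘ₗ f :=
  LinearMap.ext (inr_apply_map f i)

def toCokernel : f.pushout i →ₗ[R] B ⧸ range i :=
  (range (f.prod (-i))).liftQ ((range i).mkQ ∘ₗ snd R N B) <| by
    rintro _ ⟨a, rfl⟩
    simp

theorem inl_injective (hi : Function.Injective i) : Function.Injective (inl f i) := by
  rw [← ker_eq_bot, eq_bot_iff]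
  intro n hn
  obtain ⟨a, ha⟩ := (Submodule.Quotient.mk_eq_zero _).1 hn
  obtain ⟨hfa, hia⟩ := Prod.ext_iff.1 ha
  obtain rfl : a = 0 := hi (by simpa using hia)
  simpa using hfa.symm

theorem toCokernel_surjective : Function.Surjective (toCokernel f i) := by
  rintro ⟨b⟩
  exact ⟨Submodule.Quotient.mk (0, b), rfl⟩

theorem exact_inl_toCokernel : Function.Exact (inl f i) (toCokernel f i) := by
  refine exact_of_comp_of_mem_range (by ext; simp [inl, toCokernel]) ?_
  rintro ⟨n, b⟩ h
  obtain ⟨a, rfl⟩ := (Submodule.Quotient.mk_eq_zero _).1 h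
  refine ⟨n + f a, ?_⟩
  rw [map_add, ← inr_apply_map, inl_add_inr]
  rfl

theorem exists_comp_eq_of_splits (hi : Function.Injective i)
    (hs : ∃ s : (B ⧸ range i) →ₗ[R] f.pushout i, toCokernel f i ∘ₗ s = id) :
    ∃ g : B →ₗ[R] N, g ∘ₗ i = f := by
  obtain ⟨r, hr⟩ := (((exact_inl_toCokernel f i).split_tfae (inl_injective f i hi)
    (toCokernel_surjective f i)).out 0 1).mp hs
  refine ⟨r ∘ₗ inr f i, ?_⟩
  rw [comp_assoc, inr_comp, ← comp_assoc, hr, id_comp]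

end pushout
end LinearMap

open LinearMap.pushout in
theorem exists_le_and_mem_domain_of_splits {R : Type u} [CommRing R] {J : Ideal R}
    {N : Type v} [AddCommGroup N] [Module R N]
    (hExt : ∀ (M : Type v) [AddCommGroup M] [Module R M],
      IsTorsionByPowers J M → Module.Finite R M →
      ∀ (X : Type v) [AddCommGroup X] [Module R X] (ι : N →ₗ[R] X) (p : X →ₗ[R] M),
        Function.Injective ι → Function.Surjective p → LinearMap.range ι = LinearMap.ker p →
        ∃ s : M →ₗ[R] X, p.comp s = LinearMap.id)
    {M : Type v} [AddCommGroup M] [Module R M] (hM : IsTorsionByPowers J M)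
    (f : M →ₗ.[R] N) (x : M) : ∃ g, f ≤ g ∧ x ∈ g.domain := by
  let i := Submodule.inclusion (le_sup_left : f.domain ≤ f.domain ⊔ (R ∙ x))
  have hi : Function.Injective i := Submodule.inclusion_injective _
  have hQ : IsTorsionByPowers J (_ ⧸ LinearMap.range i) :=
    ((hM.of_injective (Submodule.injective_subtype _)).of_surjective
      (Submodule.mkQ_surjective _))
  obtain ⟨g, hg⟩ := exists_comp_eq_of_splits f.toFun i hi <|
    hExt _ hQ (f.domain.finite_quotient_sup_span_singleton x) _ _ _ (inl_injective _ _ hi)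
      (toCokernel_surjective _ _) (exact_inl_toCokernel _ _).linearMap_ker_eq.symm
  refine ⟨⟨_, g⟩, ⟨le_sup_left, fun y z hyz => ?_⟩,
    Submodule.mem_sup_right (Submodule.mem_span_singleton_self x)⟩
  obtain rfl : z = i y := Subtype.ext hyz.symm
  exact (LinearMap.congr_fun hg y).symm

theorem statement16_general {R : Type u} [CommRing R] (J : Ideal R)
    (N : Type v) [AddCommGroup N] [Module R N]
    (hExt : ∀ (M : Type v) [AddCommGroup M] [Module R M],
      IsTorsionByPowers J M → Module.Finite R M →
      ∀ (X : Type v) [AddCommGroup X] [Module R X] (ι : N →ₗ[R] X) (p : X →ₗ[R] M),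
        Function.Injective ι → Function.Surjective p → LinearMap.range ι = LinearMap.ker p →
        ∃ s : M →ₗ[R] X, p.comp s = LinearMap.id) :
    ∀ (M : Type v) [AddCommGroup M] [Module R M], IsTorsionByPowers J M →
      ∀ (M' : Submodule R M) (f : M' →ₗ[R] N),
        ∃ g : M →ₗ[R] N, ∀ x : M', g x = f x := fun _ _ _ hM M' f =>
  LinearPMap.exists_extension_of_forall_exists_mem_domain
    (exists_le_and_mem_domain_of_splits hExt hM) ⟨M', f⟩

theorem statement16 {R : Type u} [CommRing R] [IsNoetherianRing R] (J : Ideal R)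
    (N : Type v) [AddCommGroup N] [Module R N] (hN : IsTorsionByPowers J N)
    (hExt : ∀ (M : Type v) [AddCommGroup M] [Module R M],
      IsTorsionByPowers J M → Module.Finite R M →
      ∀ (X : Type v) [AddCommGroup X] [Module R X] (ι : N →ₗ[R] X) (p : X →ₗ[R] M),
        Function.Injective ι → Function.Surjective p → LinearMap.range ι = LinearMap.ker p →
        ∃ s : M →ₗ[R] X, p.comp s = LinearMap.id) :
    ∀ (M : Type v) [AddCommGroup M] [Module R M], IsTorsionByPowers J M →
      ∀ (M' : Submodule R M) (f : M' →ₗ[R] N),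
        ∃ g : M →ₗ[R] N, ∀ x : M', g x = f x :=
  statement16_general J N hExt
end
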